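/- arXiv:0909.1097 — 4 statements merged into one kernel-verified Lean document; each statement's English description precedes it below -/
import Mathlib

section
/- Let μ be a compactly supported probability measure on ℝ with moments m_k = ∫ x^k dμ(x), let p, q ∈ ℝ[x], and define Q : ℝ[x] → ℝ[x] by Q[f] = p · L_μ[L_μ[f]] + q · L_μ[f]. If Q has a polynomial system of eigenfunctions, then deg q ≤ 1 and deg p ≤ 2, and writing p(x) = a + b x + c x² and q(x) = d + e x, the moments of μ satisfy, for every n ≥ 1, a Σ_{i=0}^{n−2} m_i m_{n−2−i} + b Σ_{i=0}^{n−1} m_i m_{n−1−i} + c Σ_{i=0}^{n} m_i m_{n−i} + d m_{n−1} + e m_n = 0 (empty sums are 0). -/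
open MeasureTheory Polynomial

/-- Moments of a measure on ℝ. -/
noncomputable def mom (ρ : Measure ℝ) (k : ℕ) : ℝ := ∫ x, x ^ k ∂ρ

/-- The operator `L_ρ` on polynomials, defined via the moment sequence `m` of `ρ`:
`L[x^n] = Σ_{k=0}^{n-1} m_{n-1-k} x^k`. -/
noncomputable def Lop (m : ℕ → ℝ) (f : Polynomial ℝ) : Polynomial ℝ :=
  f.sum fun n a => C a * ∑ k ∈ Finset.range n, C (m (n - 1 - k)) * X ^ k

/-- A measure has compact support. -/
def CompactSupp (μ : Measure ℝ) : Prop := ∃ K : Set ℝ, IsCompact K ∧ μ Kᶜ = 0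

/-- A polynomial system of eigenfunctions for an operator on polynomials. -/
def HasPolyEigenfunctions (Q : Polynomial ℝ → Polynomial ℝ) : Prop :=
  ∃ (P : ℕ → Polynomial ℝ) (lam : ℕ → ℝ),
    (∀ n, (P n).degree = (n : WithBot ℕ)) ∧ (∀ n, Q (P n) = lam n • P n)

/-! `L` lowers degrees by one and multiplies the leading coefficient by `m₀ ≠ 0`. Applied to the
eigenpolynomials of degrees 1 and 2 this bounds `deg q` and `deg p`; then `Q` preserves degrees
and multiplies the coefficient of `xⁿ`, `n ≥ 2`, by the same `κ = c m₀² + e m₀`, so `λₙ = κ` for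
all `n ≥ 2`. As the eigenpolynomials span `ℝ[x]`, `Q - κ` maps every polynomial to one of
degree `≤ 1`, and the moment identity is the vanishing of the `x²`-coefficient of
`(Q - κ)[x^(n+2)]`. -/

theorem Polynomial.Sequence.sub_smul_mem_degreeLT {K : Type*} [Field K] (S : Sequence K)
    (T : K[X] →ₗ[K] K[X]) {lam : ℕ → K} {κ : K} {d : ℕ} (hT : ∀ n, T (S n) = lam n • S n)
    (hlam : ∀ n, d ≤ n → lam n = κ) (f : K[X]) : T f - κ • f ∈ degreeLT K d := by
  have hspan := S.span fun n => (leadingCoeff_ne_zero.mpr (S.ne_zero n)).isUnit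
  have hle : Submodule.span K (Set.range S) ≤ (degreeLT K d).comap (T - κ • LinearMap.id) := by
    rw [Submodule.span_le]
    rintro _ ⟨n, rfl⟩
    rw [SetLike.mem_coe, Submodule.mem_comap, LinearMap.sub_apply, LinearMap.smul_apply,
      LinearMap.id_apply, hT, ← sub_smul]
    rcases lt_or_ge n d with hn | hn
    · exact Submodule.smul_mem _ _ (mem_degreeLT.mpr (by simpa using hn))
    · simp [hlam n hn]
  exact hle (hspan ▸ Submodule.mem_top)

section Lop

variable (m : ℕ → ℝ)

theorem Lop_add (f g : ℝ[X]) : Lop m (f + g) = Lop m f + Lop m g :=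
  sum_add_index f g _ (by simp) fun _ _ _ => by rw [C_add, add_mul]

theorem Lop_smul (r : ℝ) (f : ℝ[X]) : Lop m (r • f) = r • Lop m f := by
  rw [Lop, sum_smul_index _ _ _ (by simp), Lop, Polynomial.sum, Polynomial.sum, Finset.smul_sum]
  simp only [C_mul, smul_eq_C_mul, mul_assoc]

noncomputable def Lopₗ : ℝ[X] →ₗ[ℝ] ℝ[X] where
  toFun := Lop m
  map_add' := Lop_add m
  map_smul' := Lop_smul m

theorem Lop_C (a : ℝ) : Lop m (C a) = 0 := by
  simp [Lop]

theorem coeff_Lop (f : ℝ[X]) (t : ℕ) :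
    (Lop m f).coeff t = f.sum fun n a => a * if t < n then m (n - 1 - t) else 0 := by
  simp only [Lop, Polynomial.sum, finsetSum_coeff, coeff_C_mul, coeff_X_pow, mul_ite, mul_one,
    mul_zero, Finset.sum_ite_eq, Finset.mem_range]

theorem coeff_Lop_of_natDegree_lt {f : ℝ[X]} {N : ℕ} (hf : f.natDegree < N) (t : ℕ) :
    (Lop m f).coeff t = ∑ i ∈ Finset.range (N - 1 - t), m i * f.coeff (t + 1 + i) := by
  have hIco : (Finset.range N).filter (t < ·) = Finset.Ico (t + 1) N := by
    ext n; simp only [Finset.mem_filter, Finset.mem_range, Finset.mem_Ico]; omega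
  rw [coeff_Lop, sum_over_range' f (by simp) N hf]
  simp only [mul_ite, mul_zero]
  rw [← Finset.sum_filter, hIco, Finset.sum_Ico_eq_sum_range, Nat.sub_sub, add_comm 1 t]
  refine Finset.sum_congr rfl fun i _ => ?_
  rw [mul_comm, show t + 1 + i - 1 - t = i by omega]

theorem natDegree_Lop_le (f : ℝ[X]) : (Lop m f).natDegree ≤ f.natDegree - 1 := by
  refine natDegree_le_iff_coeff_eq_zero.mpr fun t ht => ?_
  rw [coeff_Lop_of_natDegree_lt m (Nat.lt_succ_self _), show f.natDegree + 1 - 1 - t = 0 by omega,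
    Finset.sum_range_zero]

theorem coeff_Lop_of_natDegree_le_succ {f : ℝ[X]} {t : ℕ} (hf : f.natDegree ≤ t + 1) :
    (Lop m f).coeff t = m 0 * f.coeff (t + 1) := by
  rw [coeff_Lop_of_natDegree_lt m (N := t + 2) (by omega), show t + 2 - 1 - t = 1 by omega]
  simp

theorem Lop_eq_C_of_natDegree_le_one {f : ℝ[X]} (hf : f.natDegree ≤ 1) :
    Lop m f = C (m 0 * f.coeff 1) := by
  rw [eq_C_of_natDegree_le_zero (p := Lop m f) (by have := natDegree_Lop_le m f; omega),
    coeff_Lop_of_natDegree_le_succ m hf]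

theorem coeff_Lop_X_pow (k t : ℕ) :
    (Lop m (X ^ k)).coeff t = if t < k then m (k - 1 - t) else 0 := by
  rw [coeff_Lop, X_pow_eq_monomial, sum_monomial_index 1 _ (by simp), one_mul]

theorem coeff_Lop_Lop_X_pow (k t : ℕ) :
    (Lop m (Lop m (X ^ k))).coeff t = ∑ i ∈ Finset.range (k - 1 - t), m i * m (k - 2 - t - i) := by
  obtain _ | k := k
  · rw [pow_zero, ← C_1, Lop_C, ← C_0, Lop_C]
    simp
  rw [coeff_Lop_of_natDegree_lt m (N := k + 1) ((natDegree_Lop_le m _).trans_lt (by simp))]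
  refine Finset.sum_congr rfl fun i hi => ?_
  rw [coeff_Lop_X_pow, if_pos (by simp only [Finset.mem_range] at hi; omega),
    show k + 1 - 1 - (t + 1 + i) = k + 1 - 2 - t - i by omega]

end Lop

section Qop

variable (m : ℕ → ℝ) (p q : ℝ[X])

noncomputable def Qop : ℝ[X] →ₗ[ℝ] ℝ[X] :=
  LinearMap.mulLeft ℝ p ∘ₗ Lopₗ m ∘ₗ Lopₗ m + LinearMap.mulLeft ℝ q ∘ₗ Lopₗ m

theorem Qop_apply (f : ℝ[X]) : Qop m p q f = p * Lop m (Lop m f) + q * Lop m f := rfl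

variable {m p q}

theorem degree_le_one_of_Qop_eq_smul (hm : m 0 ≠ 0) {P : ℝ[X]} (hP : P.degree = 1) {lam : ℝ}
    (h : Qop m p q P = lam • P) : q.degree ≤ 1 := by
  have hPnat : P.natDegree = 1 := natDegree_eq_of_degree_eq_some hP
  have hP1 : P.coeff 1 ≠ 0 := by
    rw [← hPnat]; exact leadingCoeff_ne_zero.mpr (by rintro rfl; simp at hPnat)
  rw [Qop_apply, Lop_eq_C_of_natDegree_le_one m hPnat.le, Lop_C, mul_zero, zero_add] at h
  calc q.degree = (q * C (m 0 * P.coeff 1)).degree := (degree_mul_C (mul_ne_zero hm hP1)).symm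
    _ ≤ 1 := h ▸ (degree_smul_le _ _).trans hP.le

theorem degree_le_two_of_Qop_eq_smul (hm : m 0 ≠ 0) (hq : q.degree ≤ 1) {P : ℝ[X]}
    (hP : P.degree = 2) {lam : ℝ} (h : Qop m p q P = lam • P) : p.degree ≤ 2 := by
  have hPnat : P.natDegree = 2 := natDegree_eq_of_degree_eq_some hP
  have hP2 : P.coeff 2 ≠ 0 := by
    rw [← hPnat]; exact leadingCoeff_ne_zero.mpr (by rintro rfl; simp at hPnat)
  have hLP : (Lop m P).natDegree ≤ 1 := by have := natDegree_Lop_le m P; omega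
  have hLLP : Lop m (Lop m P) = C (m 0 * (m 0 * P.coeff 2)) := by
    rw [Lop_eq_C_of_natDegree_le_one m hLP, coeff_Lop_of_natDegree_le_succ m (by omega)]
  rw [Qop_apply, hLLP, ← eq_sub_iff_add_eq] at h
  calc p.degree = (p * C (m 0 * (m 0 * P.coeff 2))).degree :=
        (degree_mul_C (mul_ne_zero hm (mul_ne_zero hm hP2))).symm
    _ ≤ 2 := by
      rw [h]
      refine (degree_sub_le _ _).trans (max_le ((degree_smul_le _ _).trans hP.le) ?_)
      refine (degree_mul_le _ _).trans ((add_le_add hq (degree_le_of_natDegree_le hLP)).trans ?_)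
      norm_num

theorem coeff_Qop_of_natDegree_le (hp : p.natDegree ≤ 2) (hq : q.natDegree ≤ 1) {f : ℝ[X]} {k : ℕ}
    (hf : f.natDegree ≤ k + 2) :
    (Qop m p q f).coeff (k + 2) = (p.coeff 2 * m 0 ^ 2 + q.coeff 1 * m 0) * f.coeff (k + 2) := by
  have hL : (Lop m f).natDegree ≤ k + 1 := (natDegree_Lop_le m f).trans (by omega)
  have hLL : (Lop m (Lop m f)).natDegree ≤ k := (natDegree_Lop_le m _).trans (by omega)
  have hp_mul : (p * Lop m (Lop m f)).coeff (k + 2) = p.coeff 2 * (Lop m (Lop m f)).coeff k := by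
    rw [add_comm, coeff_mul_add_eq_of_natDegree_le hp hLL]
  have hq_mul : (q * Lop m f).coeff (k + 2) = q.coeff 1 * (Lop m f).coeff (k + 1) := by
    rw [show k + 2 = 1 + (k + 1) by ring, coeff_mul_add_eq_of_natDegree_le hq hL]
  rw [Qop_apply, coeff_add, hp_mul, hq_mul, coeff_Lop_of_natDegree_le_succ m hL,
    coeff_Lop_of_natDegree_le_succ m hf]
  ring

theorem eigenvalue_eq_of_Qop_eq_smul (hp : p.natDegree ≤ 2) (hq : q.natDegree ≤ 1) {P : ℝ[X]}
    {n : ℕ} (hn : 2 ≤ n) (hP : P.degree = n) {lam : ℝ} (h : Qop m p q P = lam • P) :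
    lam = p.coeff 2 * m 0 ^ 2 + q.coeff 1 * m 0 := by
  obtain ⟨k, rfl⟩ : ∃ k, n = k + 2 := ⟨n - 2, by omega⟩
  have hPnat : P.natDegree = k + 2 := natDegree_eq_of_degree_eq_some hP
  have hlead : P.coeff (k + 2) ≠ 0 := by
    rw [← hPnat]; exact leadingCoeff_ne_zero.mpr (by rintro rfl; simp at hPnat)
  have := congrArg (coeff · (k + 2)) h
  simp only [coeff_Qop_of_natDegree_le hp hq hPnat.le, coeff_smul, smul_eq_mul] at this
  exact (mul_right_cancel₀ hlead this).symm

theorem coeff_two_Qop_X_pow (hq : q.natDegree ≤ 1) {n : ℕ} (hn : 1 ≤ n) :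
    (Qop m p q (X ^ (n + 2))).coeff 2 =
      p.coeff 0 * (∑ i ∈ Finset.range (n - 1), m i * m (n - 2 - i))
      + p.coeff 1 * (∑ i ∈ Finset.range n, m i * m (n - 1 - i))
      + p.coeff 2 * (∑ i ∈ Finset.range (n + 1), m i * m (n - i))
      + q.coeff 0 * m (n - 1) + q.coeff 1 * m n := by
  have hq2 : q.coeff 2 = 0 := coeff_eq_zero_of_natDegree_lt (by omega)
  simp only [Qop_apply, coeff_add, coeff_mul, Finset.Nat.sum_antidiagonal_succ,
    Finset.Nat.antidiagonal_zero, Finset.sum_singleton, coeff_Lop_Lop_X_pow, coeff_Lop_X_pow, hq2]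
  obtain ⟨k, rfl⟩ : ∃ k, n = k + 1 := ⟨n - 1, by omega⟩
  simp [Nat.sub_sub]
  ring

end Qop

theorem stmt0_general (μ : Measure ℝ) [IsProbabilityMeasure μ]
    (p q : Polynomial ℝ)
    (hQ : HasPolyEigenfunctions
      (fun f => p * Lop (mom μ) (Lop (mom μ) f) + q * Lop (mom μ) f)) :
    q.degree ≤ 1 ∧ p.degree ≤ 2 ∧
    ∀ n : ℕ, 1 ≤ n →
      p.coeff 0 * (∑ i ∈ Finset.range (n - 1), mom μ i * mom μ (n - 2 - i))
      + p.coeff 1 * (∑ i ∈ Finset.range n, mom μ i * mom μ (n - 1 - i))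
      + p.coeff 2 * (∑ i ∈ Finset.range (n + 1), mom μ i * mom μ (n - i))
      + q.coeff 0 * mom μ (n - 1) + q.coeff 1 * mom μ n = 0 := by
  obtain ⟨P, lam, hdeg, heig⟩ := hQ
  have hP : ∀ n, Qop (mom μ) p q (P n) = lam n • P n := heig
  have hm : mom μ 0 ≠ 0 := by simp [mom]
  have hq := degree_le_one_of_Qop_eq_smul hm (hdeg 1) (hP 1)
  have hp := degree_le_two_of_Qop_eq_smul hm hq (hdeg 2) (hP 2)
  refine ⟨hq, hp, fun n hn => ?_⟩
  have hlam (k : ℕ) (hk : 2 ≤ k) :=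
    eigenvalue_eq_of_Qop_eq_smul (natDegree_le_of_degree_le hp) (natDegree_le_of_degree_le hq) hk
      (hdeg k) (hP k)
  have hmem := Sequence.sub_smul_mem_degreeLT ⟨P, hdeg⟩ _ hP hlam (X ^ (n + 2))
  have hcoeff := coeff_eq_zero_of_degree_lt (n := 2) (mem_degreeLT.mp hmem)
  rwa [coeff_sub, coeff_smul, coeff_X_pow, if_neg (by omega), smul_zero, sub_zero,
    coeff_two_Qop_X_pow (natDegree_le_of_degree_le hq) hn] at hcoeff

theorem stmt0 (μ : Measure ℝ) [IsProbabilityMeasure μ] (hcs : CompactSupp μ)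
    (p q : Polynomial ℝ)
    (hQ : HasPolyEigenfunctions
      (fun f => p * Lop (mom μ) (Lop (mom μ) f) + q * Lop (mom μ) f)) :
    q.degree ≤ 1 ∧ p.degree ≤ 2 ∧
    ∀ n : ℕ, 1 ≤ n →
      p.coeff 0 * (∑ i ∈ Finset.range (n - 1), mom μ i * mom μ (n - 2 - i))
      + p.coeff 1 * (∑ i ∈ Finset.range n, mom μ i * mom μ (n - 1 - i))
      + p.coeff 2 * (∑ i ∈ Finset.range (n + 1), mom μ i * mom μ (n - i))
      + q.coeff 0 * mom μ (n - 1) + q.coeff 1 * mom μ n = 0 :=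
  stmt0_general μ p q hQ
end

section
/- Let μ and ν be compactly supported probability measures on ℝ, and let H ∈ L¹(μ) be a c-free conjugate variable for the pair (μ, ν), i.e. for every polynomial f ∈ ℝ[x], ∬ ∂f(x, y) dμ(x) dν(y) = ∫ H f dμ. Then for all polynomials f, g ∈ ℝ[x], ∫ ( L_ν[L_μ[f]] − H · L_μ[f] ) g dμ = − ∫ L_μ[f] · L_μ[g] dν; in particular, the operator f ↦ L_ν[L_μ[f]] − H · L_μ[f] is symmetric with respect to the inner product induced by μ on polynomials. -/
open MeasureTheory Polynomial

/-- The difference quotient `∂h(x,y)` of a polynomial, with `(∂h)(x,x) = h'(x)`. -/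
noncomputable def pdq (h : Polynomial ℝ) (x y : ℝ) : ℝ :=
  if x = y then (Polynomial.derivative h).eval x else (h.eval x - h.eval y) / (x - y)

lemma Lop_eval (m : ℕ → ℝ) (f : Polynomial ℝ) (x : ℝ) :
    (Lop m f).eval x
      = ∑ n ∈ f.support, f.coeff n * ∑ k ∈ Finset.range n, m (n - 1 - k) * x ^ k := by
  simp [Lop, Polynomial.sum_def, Polynomial.eval_finset_sum]

lemma pdq_eq (f : Polynomial ℝ) (x y : ℝ) :
    pdq f x y = ∑ n ∈ f.support, f.coeff n * ∑ k ∈ Finset.range n, x ^ k * y ^ (n - 1 - k) := by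
  rcases eq_or_ne x y with h | h
  · subst h
    rw [pdq, if_pos rfl, Polynomial.derivative_apply, Polynomial.sum_def,
      Polynomial.eval_finset_sum]
    refine Finset.sum_congr rfl fun n _ => ?_
    have : ∑ k ∈ Finset.range n, x ^ k * x ^ (n - 1 - k)
        = ∑ k ∈ Finset.range n, x ^ (n - 1) := by
      refine Finset.sum_congr rfl fun k hk => ?_
      rw [← pow_add]
      congr 1
      have := Finset.mem_range.mp hk
      omega
    rw [this, Finset.sum_const, Finset.card_range]
    simp [mul_comm, mul_assoc, nsmul_eq_mul]
    ring
  · rw [pdq, if_neg h, div_eq_iff (sub_ne_zero.mpr h)]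
    rw [Polynomial.eval_eq_sum, Polynomial.eval_eq_sum, Polynomial.sum_def, Polynomial.sum_def,
      ← Finset.sum_sub_distrib, Finset.sum_mul]
    refine Finset.sum_congr rfl fun n _ => ?_
    rw [mul_assoc, geom_sum₂_mul, mul_sub]

lemma pdq_symm (f : Polynomial ℝ) (x y : ℝ) : pdq f x y = pdq f y x := by
  rcases eq_or_ne x y with h | h
  · subst h; rfl
  · rw [pdq, pdq, if_neg h, if_neg (Ne.symm h), div_eq_div_iff (sub_ne_zero.mpr h) (sub_ne_zero.mpr (Ne.symm h))]
    ring

lemma integrable_cont {ρ : Measure ℝ} [IsProbabilityMeasure ρ] (h : CompactSupp ρ)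
    {φ : ℝ → ℝ} (hφ : Continuous φ) : Integrable φ ρ := by
  obtain ⟨K, hK, hK0⟩ := h
  obtain ⟨C, hC⟩ := hK.exists_bound_of_continuousOn hφ.continuousOn
  refine Integrable.mono' (integrable_const C) hφ.aestronglyMeasurable ?_
  rw [ae_iff]
  refine measure_mono_null (fun x hx => ?_) hK0
  simp only [Set.mem_setOf_eq, not_le] at hx
  intro hxK
  exact absurd (hC x hxK) (not_le.mpr hx)

lemma integrable_H_mul {μ : Measure ℝ} [IsProbabilityMeasure μ] (h : CompactSupp μ) {H : ℝ → ℝ}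
    (hH : Integrable H μ) {φ : ℝ → ℝ} (hφ : Continuous φ) :
    Integrable (fun x => H x * φ x) μ := by
  obtain ⟨K, hK, hK0⟩ := h
  obtain ⟨C, hC⟩ := hK.exists_bound_of_continuousOn hφ.continuousOn
  refine Integrable.mono' (hH.norm.mul_const C)
    (hH.aestronglyMeasurable.mul hφ.aestronglyMeasurable) ?_
  rw [ae_iff]
  refine measure_mono_null (fun x hx => ?_) hK0
  simp only [Set.mem_setOf_eq, not_le] at hx
  intro hxK
  have : ‖H x * φ x‖ ≤ ‖H x‖ * C := by
    rw [norm_mul]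
    exact mul_le_mul_of_nonneg_left (hC x hxK) (norm_nonneg _)
  exact absurd this (not_le.mpr hx)

lemma integrable_pdq {ρ : Measure ℝ} [IsProbabilityMeasure ρ] (h : CompactSupp ρ)
    (f : Polynomial ℝ) (x : ℝ) : Integrable (fun y => pdq f x y) ρ := by
  have he : (fun y => pdq f x y)
      = fun y => ∑ n ∈ f.support, f.coeff n * ∑ k ∈ Finset.range n, x ^ k * y ^ (n - 1 - k) :=
    funext fun y => pdq_eq f x y
  rw [he]
  exact integrable_cont h (by fun_prop)

lemma integrable_mul_pdq {ρ : Measure ℝ} [IsProbabilityMeasure ρ] (h : CompactSupp ρ)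
    (p g : Polynomial ℝ) (x : ℝ) : Integrable (fun y => p.eval y * pdq g x y) ρ := by
  have he : (fun y => p.eval y * pdq g x y)
      = fun y => p.eval y * ∑ n ∈ g.support, g.coeff n * ∑ k ∈ Finset.range n, x ^ k * y ^ (n - 1 - k) := by
    funext y; rw [pdq_eq]
  rw [he]
  exact integrable_cont h (by fun_prop)

lemma intLop {ρ : Measure ℝ} [IsProbabilityMeasure ρ] (h : CompactSupp ρ)
    (f : Polynomial ℝ) (x : ℝ) : ∫ y, pdq f x y ∂ρ = (Lop (mom ρ) f).eval x := by
  simp_rw [pdq_eq]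
  rw [integral_finset_sum _ fun n _ => integrable_cont h (by fun_prop), Lop_eval]
  refine Finset.sum_congr rfl fun n _ => ?_
  rw [integral_const_mul]
  congr 1
  rw [integral_finset_sum _ fun k _ => integrable_cont h (by fun_prop)]
  refine Finset.sum_congr rfl fun k _ => ?_
  rw [integral_const_mul, mom, mul_comm]

lemma pdq_mul (p g : Polynomial ℝ) (x y : ℝ) :
    pdq (p * g) x y = pdq p x y * g.eval x + p.eval y * pdq g x y := by
  rcases eq_or_ne x y with h | h
  · subst h
    rw [pdq, pdq, pdq, if_pos rfl, if_pos rfl, if_pos rfl, Polynomial.derivative_mul,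
      Polynomial.eval_add, Polynomial.eval_mul, Polynomial.eval_mul]
    try ring
  · simp only [pdq, if_neg h, Polynomial.eval_mul]
    field_simp
    ring

lemma inner_eval {ν : Measure ℝ} [IsProbabilityMeasure ν] (hcsν : CompactSupp ν)
    (p g : Polynomial ℝ) (x : ℝ) :
    ∫ y, p.eval y * pdq g x y ∂ν
      = ∑ n ∈ g.support, g.coeff n
          * ∑ k ∈ Finset.range n, (∫ y, p.eval y * y ^ (n - 1 - k) ∂ν) * x ^ k := by
  have h1 : ∀ y, p.eval y * pdq g x y
      = ∑ n ∈ g.support, g.coeff n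
          * ∑ k ∈ Finset.range n, (p.eval y * y ^ (n - 1 - k)) * x ^ k := by
    intro y
    rw [pdq_eq]
    simp only [Finset.mul_sum]
    refine Finset.sum_congr rfl fun n _ => Finset.sum_congr rfl fun k _ => by ring
  rw [integral_congr_ae (ae_of_all ν h1)]
  rw [integral_finset_sum _ fun n _ => integrable_cont hcsν (by fun_prop)]
  refine Finset.sum_congr rfl fun n _ => ?_
  rw [integral_const_mul]
  congr 1
  rw [integral_finset_sum _ fun k _ => integrable_cont hcsν (by fun_prop)]
  refine Finset.sum_congr rfl fun k _ => ?_
  rw [integral_mul_const]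

lemma swap_int {μ ν : Measure ℝ} [IsProbabilityMeasure μ] [IsProbabilityMeasure ν]
    (hcsμ : CompactSupp μ) (hcsν : CompactSupp ν) (p g : Polynomial ℝ) :
    ∫ x, (∫ y, p.eval y * pdq g x y ∂ν) ∂μ
      = ∫ y, p.eval y * (Lop (mom μ) g).eval y ∂ν := by
  rw [integral_congr_ae (ae_of_all μ (inner_eval hcsν p g))]
  rw [integral_finset_sum _ fun n _ => integrable_cont hcsμ (by fun_prop)]
  have h2 : ∀ y, p.eval y * (Lop (mom μ) g).eval y
      = ∑ n ∈ g.support, g.coeff n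
          * ∑ k ∈ Finset.range n, (p.eval y * y ^ k) * mom μ (n - 1 - k) := by
    intro y
    rw [Lop_eval]
    simp only [Finset.mul_sum]
    refine Finset.sum_congr rfl fun n _ => Finset.sum_congr rfl fun k _ => by ring
  rw [integral_congr_ae (ae_of_all ν h2)]
  rw [integral_finset_sum _ fun n _ => integrable_cont hcsν (by fun_prop)]
  refine Finset.sum_congr rfl fun n _ => ?_
  rw [integral_const_mul, integral_const_mul]
  congr 1
  rw [integral_finset_sum _ fun k _ => integrable_cont hcsμ (by fun_prop),
    integral_finset_sum _ fun k _ => integrable_cont hcsν (by fun_prop)]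
  have hL : ∀ k, (∫ a, (∫ y, p.eval y * y ^ (n - 1 - k) ∂ν) * a ^ k ∂μ)
      = (∫ y, p.eval y * y ^ (n - 1 - k) ∂ν) * mom μ k := fun k => by
    rw [integral_const_mul]; rfl
  have hR : ∀ k, (∫ a, (p.eval a * a ^ k) * mom μ (n - 1 - k) ∂ν)
      = (∫ a, p.eval a * a ^ k ∂ν) * mom μ (n - 1 - k) := fun k => integral_mul_const _ _
  rw [Finset.sum_congr rfl fun k _ => hL k, Finset.sum_congr rfl fun k _ => hR k]
  have hrf := Finset.sum_range_reflect
    (fun k => (∫ a, p.eval a * a ^ k ∂ν) * mom μ (n - 1 - k)) n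
  rw [← hrf]
  refine Finset.sum_congr rfl fun j hj => ?_
  have hj' := Finset.mem_range.mp hj
  congr 2
  omega

theorem stmt9 (μ ν : Measure ℝ) [IsProbabilityMeasure μ] [IsProbabilityMeasure ν]
    (hcsμ : CompactSupp μ) (hcsν : CompactSupp ν)
    (H : ℝ → ℝ) (hH : Integrable H μ)
    (hconj : ∀ f : Polynomial ℝ,
      ∫ x, (∫ y, pdq f x y ∂ν) ∂μ = ∫ x, H x * f.eval x ∂μ) :
    (∀ f g : Polynomial ℝ,
      ∫ x, ((Lop (mom ν) (Lop (mom μ) f)).eval x - H x * (Lop (mom μ) f).eval x) * g.eval x ∂μ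
        = -∫ x, (Lop (mom μ) f).eval x * (Lop (mom μ) g).eval x ∂ν)
    ∧ ∀ f g : Polynomial ℝ,
      ∫ x, ((Lop (mom ν) (Lop (mom μ) f)).eval x - H x * (Lop (mom μ) f).eval x) * g.eval x ∂μ
        = ∫ x, f.eval x *
            ((Lop (mom ν) (Lop (mom μ) g)).eval x - H x * (Lop (mom μ) g).eval x) ∂μ := by
  have key : ∀ f g : Polynomial ℝ,
      ∫ x, ((Lop (mom ν) (Lop (mom μ) f)).eval x - H x * (Lop (mom μ) f).eval x) * g.eval x ∂μ
        = -∫ x, (Lop (mom μ) f).eval x * (Lop (mom μ) g).eval x ∂ν := by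
    intro f g
    set p := Lop (mom μ) f with hp
    have h1 := hconj (p * g)
    have hinner2 : ∀ x, ∫ y, pdq (p * g) x y ∂ν
        = (Lop (mom ν) p).eval x * g.eval x + ∫ y, p.eval y * pdq g x y ∂ν := by
      intro x
      rw [integral_congr_ae (ae_of_all ν (fun y => pdq_mul p g x y))]
      rw [integral_add ((integrable_pdq hcsν p x).mul_const _) (integrable_mul_pdq hcsν p g x)]
      rw [integral_mul_const, intLop hcsν]
    rw [integral_congr_ae (ae_of_all μ hinner2)] at h1
    have B : Integrable (fun x => ∫ y, p.eval y * pdq g x y ∂ν) μ := by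
      have hB : Integrable (fun x => ∑ n ∈ g.support, g.coeff n
          * ∑ k ∈ Finset.range n, (∫ y, p.eval y * y ^ (n - 1 - k) ∂ν) * x ^ k) μ :=
        integrable_cont hcsμ (by fun_prop)
      exact hB.congr (ae_of_all μ fun x => (inner_eval hcsν p g x).symm)
    rw [integral_add (integrable_cont hcsμ (by fun_prop)) B] at h1
    have hswap := swap_int hcsμ hcsν p g
    have hre : ∀ x : ℝ, ((Lop (mom ν) p).eval x - H x * p.eval x) * g.eval x
        = (Lop (mom ν) p).eval x * g.eval x - H x * (p * g).eval x := by
      intro x; rw [Polynomial.eval_mul]; ring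
    rw [integral_congr_ae (ae_of_all μ hre)]
    rw [integral_sub (integrable_cont hcsμ (by fun_prop))
      (integrable_H_mul hcsμ hH (by fun_prop))]
    have hfin : ∫ x, p.eval x * (Lop (mom μ) g).eval x ∂ν
        = ∫ y, p.eval y * (Lop (mom μ) g).eval y ∂ν := rfl
    linarith [h1, hswap]
  refine ⟨key, fun f g => ?_⟩
  rw [key f g]
  have hc : ∫ x, f.eval x *
        ((Lop (mom ν) (Lop (mom μ) g)).eval x - H x * (Lop (mom μ) g).eval x) ∂μ
      = ∫ x, ((Lop (mom ν) (Lop (mom μ) g)).eval x - H x * (Lop (mom μ) g).eval x)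
          * f.eval x ∂μ :=
    integral_congr_ae (ae_of_all μ fun x => mul_comm _ _)
  rw [hc, key g f, neg_inj]
  exact integral_congr_ae (ae_of_all ν fun x => mul_comm _ _)
end

section
/- Let μ and ν be compactly supported probability measures on ℝ, β ∈ ℝ, γ > 0. Then the identity ∬ ∂f(x, y) dν(x) dμ(y) = γ^{−1} ∫ (x − β) f(x) dμ(x) holds for every continuously differentiable function f : ℝ → ℝ if and only if μ = Φ_{β,γ}[ν]. -/
/-!
Both sides are linear in `f`. Since `∂(t ↦ tᵐ)(x, y) = ∑_{i<m} xⁱ y^{m-1-i}`, for `f = tᵐ` the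
left side is `∑_{i<m} m^ν_i m^μ_{m-1-i}` and the right side is `γ⁻¹ (m^μ_{m+1} - β m^μ_m)`, so the
identity for monomials is exactly the recursion of `Φ_{β,γ}` at `n = m + 1`; hence it holds for all
polynomials. To reach a `C¹` function `f`, fix an interval `[a, b]` carrying both measures,
approximate `f'` uniformly there by a polynomial (Weierstrass) and integrate it to a polynomial `q`
with `q(a) = f(a)`. By the mean value theorem `∂(f - q)` and `(f - q)(x) / (x - a)` are bounded by
`sup |f' - q'|` on `[a, b]`, so both sides of the identity for `f - q` are arbitrarily small.
-/

open MeasureTheory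

/-- The difference quotient `∂f(x,y)` of a function, with `(∂f)(x,x) = f'(x)`. -/
noncomputable def dqd (f : ℝ → ℝ) (x y : ℝ) : ℝ :=
  if x = y then deriv f x else (f x - f y) / (x - y)

/-- `JacobiShift β γ mν mμ` says (at the level of moment sequences) that `μ = Φ_{β,γ}[ν]`,
the Jacobi-parameter left shift of `ν`:
`m^μ_n = β m^μ_{n-1} + γ Σ_{i+j=n-2} m^ν_i m^μ_j` for every `n ≥ 1`. -/
def JacobiShift (β γ : ℝ) (mν mμ : ℕ → ℝ) : Prop :=
  ∀ n : ℕ, 1 ≤ n →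
    mμ n = β * mμ (n - 1) + γ * ∑ i ∈ Finset.range (n - 1), mν i * mμ (n - 2 - i)

open Set

lemma dqd_pow (n : ℕ) (x y : ℝ) :
    dqd (fun t => t ^ n) x y = ∑ i ∈ Finset.range n, x ^ i * y ^ (n - 1 - i) := by
  unfold dqd
  split_ifs with h
  · subst h
    rw [deriv_pow_field, Finset.sum_congr rfl fun i hi => ?_, Finset.sum_const,
      Finset.card_range, nsmul_eq_mul]
    rw [← pow_add]
    congr 1
    have := Finset.mem_range.mp hi
    omega
  · rw [eq_comm, eq_div_iff (sub_ne_zero.mpr h), geom_sum₂_mul]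

lemma dqd_add {f g : ℝ → ℝ} {x : ℝ} (hf : DifferentiableAt ℝ f x) (hg : DifferentiableAt ℝ g x)
    (y : ℝ) : dqd (fun t => f t + g t) x y = dqd f x y + dqd g x y := by
  unfold dqd
  split_ifs
  · exact deriv_add hf hg
  · ring

lemma dqd_const_mul (c : ℝ) (f : ℝ → ℝ) (x y : ℝ) :
    dqd (fun t => c * f t) x y = c * dqd f x y := by
  unfold dqd
  split_ifs
  · rw [deriv_const_mul_field']
  · ring

lemma measurable_dqd {f : ℝ → ℝ} (hf : Measurable f) :
    Measurable fun p : ℝ × ℝ => dqd f p.1 p.2 :=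
  Measurable.ite (measurableSet_eq_fun measurable_fst measurable_snd)
    ((measurable_deriv f).comp measurable_fst)
    (((hf.comp measurable_fst).sub (hf.comp measurable_snd)).div
      (measurable_fst.sub measurable_snd))

lemma abs_dqd_le_of_abs_deriv_le {f : ℝ → ℝ} {s : Set ℝ} {C x y : ℝ} (hs : Convex ℝ s)
    (hf : ∀ z ∈ s, DifferentiableAt ℝ f z) (hC : ∀ z ∈ s, |deriv f z| ≤ C)
    (hx : x ∈ s) (hy : y ∈ s) : |dqd f x y| ≤ C := by
  unfold dqd
  split_ifs with hxy
  · exact hC x hx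
  · rw [abs_div, div_le_iff₀ (abs_pos.mpr (sub_ne_zero.mpr hxy))]
    exact hs.norm_image_sub_le_of_norm_deriv_le hf hC hy hx

lemma exists_abs_dqd_le {f : ℝ → ℝ} (hf : ContDiff ℝ 1 f) (a b : ℝ) :
    ∃ C, ∀ x ∈ Icc a b, ∀ y ∈ Icc a b, |dqd f x y| ≤ C := by
  obtain ⟨C, hC⟩ :=
    isCompact_Icc.exists_bound_of_continuousOn (hf.continuous_deriv le_rfl).continuousOn
  exact ⟨C, fun x hx y hy => abs_dqd_le_of_abs_deriv_le (convex_Icc a b)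
    (fun z _ => (hf.differentiable one_ne_zero).differentiableAt) hC hx hy⟩

lemma Polynomial.exists_derivative_eq (p : Polynomial ℝ) :
    ∃ q : Polynomial ℝ, q.derivative = p := by
  induction p using Polynomial.induction_on' with
  | add p q hp hq =>
    obtain ⟨P, rfl⟩ := hp
    obtain ⟨Q, rfl⟩ := hq
    exact ⟨P + Q, Polynomial.derivative_add⟩
  | monomial n a =>
    refine ⟨Polynomial.C (a / (n + 1)) * Polynomial.X ^ (n + 1), ?_⟩
    rw [Polynomial.derivative_C_mul_X_pow, ← Polynomial.C_mul_X_pow_eq_monomial]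
    push_cast
    field_simp

lemma Polynomial.contDiff_eval (p : Polynomial ℝ) (n : WithTop ℕ∞) :
    ContDiff ℝ n fun t => p.eval t :=
  p.contDiff_aeval n

lemma exists_polynomial_abs_deriv_sub_le {f : ℝ → ℝ} (hf : ContDiff ℝ 1 f) (a b : ℝ) {ε : ℝ}
    (hε : 0 < ε) : ∃ q : Polynomial ℝ,
      (∀ x ∈ Icc a b, |deriv (fun t => f t - q.eval t) x| ≤ ε) ∧
      ∀ x ∈ Icc a b, |f x - q.eval x| ≤ ε * |x - a| := by
  obtain ⟨p, hp⟩ := exists_polynomial_near_of_continuousOn a b (deriv f)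
    (hf.continuous_deriv le_rfl).continuousOn ε hε
  obtain ⟨q, hq⟩ := p.exists_derivative_eq
  set r := q + Polynomial.C (f a - q.eval a)
  have hfd := hf.differentiable one_ne_zero
  have hderiv : ∀ x ∈ Icc a b, |deriv (fun t => f t - r.eval t) x| ≤ ε := fun x hx => by
    rw [deriv_fun_sub (hfd x) (r.differentiableAt), Polynomial.deriv, Polynomial.derivative_add,
      Polynomial.derivative_C, add_zero, hq, abs_sub_comm]
    exact (hp x hx).le
  refine ⟨r, hderiv, fun x hx => ?_⟩
  have := (convex_Icc a b).norm_image_sub_le_of_norm_deriv_le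
    (fun z _ => (hfd z).sub r.differentiableAt) hderiv (left_mem_Icc.mpr (hx.1.trans hx.2)) hx
  simpa [r] using this

lemma jacobiShift_iff {β γ : ℝ} (hγ : γ ≠ 0) (mν mμ : ℕ → ℝ) :
    JacobiShift β γ mν mμ ↔ ∀ m : ℕ,
      ∑ i ∈ Finset.range m, mν i * mμ (m - 1 - i) = γ⁻¹ * (mμ (m + 1) - β * mμ m) := by
  have hidx : ∀ m i : ℕ, m + 1 - 2 - i = m - 1 - i := by omega
  refine ⟨fun h m => ?_, fun h n hn => ?_⟩
  · rw [h (m + 1) (by omega), Nat.add_sub_cancel]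
    simp only [hidx]
    field_simp
    ring
  · obtain ⟨m, rfl⟩ : ∃ m, n = m + 1 := ⟨n - 1, by omega⟩
    rw [Nat.add_sub_cancel]
    simp only [hidx, h m]
    field_simp
    ring

lemma exists_ae_mem_Icc_of_compactSupp {μ ν : Measure ℝ} (hμ : CompactSupp μ)
    (hν : CompactSupp ν) : ∃ a b : ℝ, (∀ᵐ x ∂μ, x ∈ Icc a b) ∧ ∀ᵐ x ∂ν, x ∈ Icc a b := by
  obtain ⟨K, hK, hμK⟩ := hμ
  obtain ⟨L, hL, hνL⟩ := hν
  have hKL := (hK.union hL).isBounded.subset_Icc_sInf_sSup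
  exact ⟨_, _,
    mem_ae_iff.mpr (measure_mono_null (compl_subset_compl.mpr (subset_union_left.trans hKL)) hμK),
    mem_ae_iff.mpr (measure_mono_null (compl_subset_compl.mpr (subset_union_right.trans hKL)) hνL)⟩

section

variable {μ ν : Measure ℝ} {a b : ℝ}

lemma ContinuousOn.integrable_of_ae_mem_Icc [IsFiniteMeasure μ] {g : ℝ → ℝ}
    (hg : ContinuousOn g (Icc a b)) (hμ : ∀ᵐ x ∂μ, x ∈ Icc a b) : Integrable g μ := by
  rw [← Measure.restrict_eq_self_of_ae_mem hμ]
  exact hg.integrableOn_Icc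

lemma integrable_pow_of_ae_mem_Icc [IsFiniteMeasure μ] (hμ : ∀ᵐ x ∂μ, x ∈ Icc a b) (k : ℕ) :
    Integrable (fun x => x ^ k) μ :=
  (continuous_pow k).continuousOn.integrable_of_ae_mem_Icc hμ

lemma integrable_sub_mul_of_ae_mem_Icc [IsFiniteMeasure μ] (hμ : ∀ᵐ x ∂μ, x ∈ Icc a b)
    (β : ℝ) {g : ℝ → ℝ} (hg : Continuous g) : Integrable (fun x => (x - β) * g x) μ :=
  ((continuous_id.sub continuous_const).mul hg).continuousOn.integrable_of_ae_mem_Icc hμ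

lemma integrable_dqd [IsFiniteMeasure μ] (hμ : ∀ᵐ x ∂μ, x ∈ Icc a b) {f : ℝ → ℝ}
    (hf : ContDiff ℝ 1 f) {x : ℝ} (hx : x ∈ Icc a b) : Integrable (fun y => dqd f x y) μ := by
  obtain ⟨C, hC⟩ := exists_abs_dqd_le hf a b
  exact .of_bound
    ((measurable_dqd hf.continuous.measurable).comp measurable_prodMk_left).aestronglyMeasurable
    C (hμ.mono fun y hy => hC x hx y hy)

lemma integrable_integral_dqd [IsFiniteMeasure μ] [IsFiniteMeasure ν]
    (hμ : ∀ᵐ x ∂μ, x ∈ Icc a b) (hν : ∀ᵐ x ∂ν, x ∈ Icc a b) {f : ℝ → ℝ} (hf : ContDiff ℝ 1 f) :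
    Integrable (fun x => ∫ y, dqd f x y ∂μ) ν := by
  obtain ⟨C, hC⟩ := exists_abs_dqd_le hf a b
  have hmeas := (measurable_dqd hf.continuous.measurable).stronglyMeasurable
    |>.integral_prod_right' (ν := μ)
  exact .of_bound hmeas.aestronglyMeasurable (C * μ.real univ)
    (hν.mono fun x hx => norm_integral_le_of_norm_le_const (hμ.mono fun y hy => hC x hx y hy))

lemma abs_integral_integral_dqd_le [IsProbabilityMeasure μ] [IsProbabilityMeasure ν]
    (hμ : ∀ᵐ x ∂μ, x ∈ Icc a b) (hν : ∀ᵐ x ∂ν, x ∈ Icc a b) {f : ℝ → ℝ} {C : ℝ}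
    (hf : ∀ z ∈ Icc a b, DifferentiableAt ℝ f z) (hC : ∀ z ∈ Icc a b, |deriv f z| ≤ C) :
    |∫ x, ∫ y, dqd f x y ∂μ ∂ν| ≤ C := by
  have hinner : ∀ x ∈ Icc a b, |∫ y, dqd f x y ∂μ| ≤ C := fun x hx => by
    simpa using norm_integral_le_of_norm_le_const (f := fun y => dqd f x y)
      (hμ.mono fun y hy => abs_dqd_le_of_abs_deriv_le (convex_Icc a b) hf hC hx hy)
  simpa using norm_integral_le_of_norm_le_const (f := fun x => ∫ y, dqd f x y ∂μ) (hν.mono hinner)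

lemma integral_integral_dqd_add [IsFiniteMeasure μ] [IsFiniteMeasure ν]
    (hμ : ∀ᵐ x ∂μ, x ∈ Icc a b) (hν : ∀ᵐ x ∂ν, x ∈ Icc a b) {f g : ℝ → ℝ}
    (hf : ContDiff ℝ 1 f) (hg : ContDiff ℝ 1 g) :
    ∫ x, ∫ y, dqd (fun t => f t + g t) x y ∂μ ∂ν
      = ∫ x, ∫ y, dqd f x y ∂μ ∂ν + ∫ x, ∫ y, dqd g x y ∂μ ∂ν := by
  rw [← integral_add (integrable_integral_dqd hμ hν hf) (integrable_integral_dqd hμ hν hg)]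
  refine integral_congr_ae (hν.mono fun x hx => ?_)
  simp only [dqd_add ((hf.differentiable one_ne_zero) x) ((hg.differentiable one_ne_zero) x)]
  exact integral_add (integrable_dqd hμ hf hx) (integrable_dqd hμ hg hx)

lemma integral_integral_dqd_const_mul (c : ℝ) (f : ℝ → ℝ) :
    ∫ x, ∫ y, dqd (fun t => c * f t) x y ∂μ ∂ν = c * ∫ x, ∫ y, dqd f x y ∂μ ∂ν := by
  simp only [dqd_const_mul, integral_const_mul]

lemma integral_integral_dqd_pow [IsFiniteMeasure μ] [IsFiniteMeasure ν]
    (hμ : ∀ᵐ x ∂μ, x ∈ Icc a b) (hν : ∀ᵐ x ∂ν, x ∈ Icc a b) (m : ℕ) :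
    ∫ x, ∫ y, dqd (fun t => t ^ m) x y ∂μ ∂ν
      = ∑ i ∈ Finset.range m, mom ν i * mom μ (m - 1 - i) := by
  simp only [dqd_pow, integral_const_mul,
    integral_finsetSum _ fun i _ => (integrable_pow_of_ae_mem_Icc hμ _).const_mul _]
  rw [integral_finsetSum _ fun i _ => (integrable_pow_of_ae_mem_Icc hν i).mul_const _]
  simp only [integral_mul_const, mom]

lemma integral_sub_mul_pow [IsFiniteMeasure μ] (hμ : ∀ᵐ x ∂μ, x ∈ Icc a b) (β : ℝ) (m : ℕ) :
    ∫ x, (x - β) * x ^ m ∂μ = mom μ (m + 1) - β * mom μ m := by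
  simp only [sub_mul, ← pow_succ']
  rw [integral_sub (integrable_pow_of_ae_mem_Icc hμ _)
    ((integrable_pow_of_ae_mem_Icc hμ _).const_mul β), integral_const_mul]
  rfl

lemma abs_integral_sub_mul_le [IsFiniteMeasure μ] (hμ : ∀ᵐ x ∂μ, x ∈ Icc a b) (β : ℝ)
    {g : ℝ → ℝ} {ε : ℝ} (hg : ∀ x ∈ Icc a b, |g x| ≤ ε * |x - a|) :
    |∫ x, (x - β) * g x ∂μ| ≤ ε * ∫ x, |x - β| * |x - a| ∂μ := by
  rw [← integral_const_mul]
  refine norm_integral_le_of_norm_le (f := fun x => (x - β) * g x)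
    ((by fun_prop : Continuous fun x => ε * (|x - β| * |x - a|)).continuousOn
      |>.integrable_of_ae_mem_Icc hμ) (hμ.mono fun x hx => ?_)
  rw [Real.norm_eq_abs, abs_mul, mul_left_comm]
  exact mul_le_mul_of_nonneg_left (hg x hx) (abs_nonneg _)

lemma integral_integral_dqd_eval_eq_of_forall_pow [IsFiniteMeasure μ] [IsFiniteMeasure ν]
    (hμ : ∀ᵐ x ∂μ, x ∈ Icc a b) (hν : ∀ᵐ x ∂ν, x ∈ Icc a b) {β c : ℝ}
    (h : ∀ m : ℕ, ∫ x, ∫ y, dqd (fun t => t ^ m) x y ∂μ ∂ν = c * ∫ x, (x - β) * x ^ m ∂μ)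
    (p : Polynomial ℝ) :
    ∫ x, ∫ y, dqd (fun t => p.eval t) x y ∂μ ∂ν = c * ∫ x, (x - β) * p.eval x ∂μ := by
  induction p using Polynomial.induction_on' with
  | add p q hp hq =>
    simp only [Polynomial.eval_add, mul_add]
    rw [integral_integral_dqd_add hμ hν (p.contDiff_eval 1) (q.contDiff_eval 1),
      integral_add (integrable_sub_mul_of_ae_mem_Icc hμ β p.continuous)
        (integrable_sub_mul_of_ae_mem_Icc hμ β q.continuous), hp, hq, mul_add]
  | monomial n a =>
    simp only [Polynomial.eval_monomial, integral_integral_dqd_const_mul, h, mul_left_comm _ a,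
      integral_const_mul]

theorem integral_integral_dqd_eq_of_forall_pow [IsProbabilityMeasure μ] [IsProbabilityMeasure ν]
    (hμ : ∀ᵐ x ∂μ, x ∈ Icc a b) (hν : ∀ᵐ x ∂ν, x ∈ Icc a b) {β c : ℝ}
    (h : ∀ m : ℕ, ∫ x, ∫ y, dqd (fun t => t ^ m) x y ∂μ ∂ν = c * ∫ x, (x - β) * x ^ m ∂μ)
    {f : ℝ → ℝ} (hf : ContDiff ℝ 1 f) :
    ∫ x, ∫ y, dqd f x y ∂μ ∂ν = c * ∫ x, (x - β) * f x ∂μ := by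
  set K := ∫ x, |x - β| * |x - a| ∂μ
  have hK : 0 ≤ K := integral_nonneg fun x => by positivity
  have hclose : ∀ ε > 0,
      |∫ x, ∫ y, dqd f x y ∂μ ∂ν - c * ∫ x, (x - β) * f x ∂μ| ≤ ε * (1 + |c| * K) := by
    intro ε hε
    obtain ⟨q, hderiv, hsmall⟩ := exists_polynomial_abs_deriv_sub_le hf a b hε
    have hg : ContDiff ℝ 1 fun t => f t - q.eval t := hf.sub (q.contDiff_eval 1)
    have hL := integral_integral_dqd_add hμ hν (q.contDiff_eval 1) hg
    have hR := integral_add (integrable_sub_mul_of_ae_mem_Icc hμ β q.continuous)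
      (integrable_sub_mul_of_ae_mem_Icc hμ β hg.continuous)
    simp only [add_sub_cancel, ← mul_add] at hL hR
    rw [hL, hR, integral_integral_dqd_eval_eq_of_forall_pow hμ hν h]
    calc _ = |∫ x, ∫ y, dqd (fun t => f t - q.eval t) x y ∂μ ∂ν
            - c * ∫ x, (x - β) * (f x - q.eval x) ∂μ| := by congr 1; ring
      _ ≤ ε + |c| * (ε * K) := by
        refine (abs_sub _ _).trans (add_le_add ?_ ?_)
        · exact abs_integral_integral_dqd_le hμ hν
            (fun z _ => ((hf.differentiable one_ne_zero) z).sub q.differentiableAt) hderiv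
        · rw [abs_mul]
          exact mul_le_mul_of_nonneg_left (abs_integral_sub_mul_le hμ β hsmall) (abs_nonneg c)
      _ = ε * (1 + |c| * K) := by ring
  refine eq_of_forall_dist_le fun ε hε => ?_
  have := hclose (ε / (1 + |c| * K)) (by positivity)
  rwa [div_mul_cancel₀ _ (by positivity)] at this

end

theorem stmt11 (μ ν : Measure ℝ) [IsProbabilityMeasure μ] [IsProbabilityMeasure ν]
    (hcsμ : CompactSupp μ) (hcsν : CompactSupp ν) (β : ℝ) (γ : ℝ) (hγ : 0 < γ) :
    (∀ f : ℝ → ℝ, ContDiff ℝ 1 f →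
      ∫ x, (∫ y, dqd f x y ∂μ) ∂ν = γ⁻¹ * ∫ x, (x - β) * f x ∂μ)
    ↔ JacobiShift β γ (mom ν) (mom μ) := by
  obtain ⟨a, b, hμ, hν⟩ := exists_ae_mem_Icc_of_compactSupp hcsμ hcsν
  rw [jacobiShift_iff hγ.ne']
  simp only [← integral_integral_dqd_pow hμ hν, ← integral_sub_mul_pow hμ]
  exact ⟨fun h m => h _ (contDiff_id.pow m),
    fun h f hf => integral_integral_dqd_eq_of_forall_pow hμ hν h hf⟩
end

section
/- Let μ and ν be compactly supported probability measures on ℝ with moments m^μ_k and m^ν_k, and let a, b, c, d, e ∈ ℝ satisfy c + e ≠ 0 and (e ≠ 0 or d = 0). Suppose that for every n ≥ 1, a Σ_{i+j=n−2} m^μ_i m^ν_j + b Σ_{i+j=n−1} m^μ_i m^ν_j + c Σ_{i+j=n} m^μ_i m^ν_j + d m^μ_{n−1} + e m^μ_n = 0 (sums over i, j ≥ 0). Then the operator Q[f] = (a + b x + c x²) L_ν[L_μ[f]] + (d + e x) L_μ[f] on ℝ[x] has a polynomial system of eigenfunctions, with eigenvalues 0 in degree 0, e in degree 1, and c + e in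 every degree n ≥ 2. -/
open MeasureTheory Polynomial

/-!
The divided-difference operator satisfies `L[X f] = X L[f] + ℓ(f)`, where `ℓ` is integration
against the measure. Hence `Q[X f] = X Q[f] + ℓ_ν(L_μ f) A + ℓ_μ(f) B` with `A = a + b x + c x²`,
`B = d + e x`, and an induction on `n` using the moment recurrence shows that
`Q[x^n] = (c + e) x^n - c T_n x + γ_n` for `n ≥ 1`, where `T_n = ℓ_ν(L_μ x^n)`. So `Q` maps
`x^n` into the span of `x^n, x, 1`, and since `Q[x] = e x + d`, `Q[1] = 0`, the polynomial
`x^n - T_n x + q_n` is an eigenfunction for a suitable constant `q_n` (this needs `c + e ≠ 0`).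
-/

noncomputable def Lop.toLinearMap (m : ℕ → ℝ) : ℝ[X] →ₗ[ℝ] ℝ[X] :=
  lsum fun n =>
    LinearMap.smulRight LinearMap.id (∑ k ∈ Finset.range n, C (m (n - 1 - k)) * X ^ k)

section Lop

variable (m : ℕ → ℝ)

theorem Lop.toLinearMap_apply (f : ℝ[X]) : Lop.toLinearMap m f = Lop m f := by
  simp [Lop.toLinearMap, Lop, lsum_apply, smul_eq_C_mul]

theorem Lop_monomial (n : ℕ) (a : ℝ) :
    Lop m (monomial n a) = C a * ∑ k ∈ Finset.range n, C (m (n - 1 - k)) * X ^ k := by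
  simp [Lop, sum_monomial_index]

theorem Lop_zero : Lop m 0 = 0 := by
  simp [Lop]

theorem Lop_one : Lop m 1 = 0 := by
  simpa using Lop_C m 1

theorem Lop_X_pow (n : ℕ) :
    Lop m (X ^ n) = ∑ k ∈ Finset.range n, C (m (n - 1 - k)) * X ^ k := by
  simp [X_pow_eq_monomial, Lop_monomial]

end Lop

noncomputable def momentFunctional (m : ℕ → ℝ) : ℝ[X] →ₗ[ℝ] ℝ :=
  lsum fun n => LinearMap.smulRight LinearMap.id (m n)

theorem momentFunctional_monomial (m : ℕ → ℝ) (n : ℕ) (a : ℝ) :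
    momentFunctional m (monomial n a) = a * m n := by
  simp [momentFunctional]

theorem Lop_X_mul (m : ℕ → ℝ) (f : ℝ[X]) :
    Lop m (X * f) = X * Lop m f + C (momentFunctional m f) := by
  induction f using Polynomial.induction_on' with
  | add f g hf hg => simp only [mul_add, Lop_add, hf, hg, map_add]; ring
  | monomial n a =>
    rw [X_mul_monomial, Lop_monomial, Lop_monomial, momentFunctional_monomial,
      Finset.sum_range_succ', mul_add, Finset.mul_sum, Finset.mul_sum, Finset.mul_sum]
    congr 1
    · refine Finset.sum_congr rfl fun k _ => ?_
      rw [show n + 1 - 1 - (k + 1) = n - 1 - k by omega]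
      ring
    · simp

theorem momentFunctional_C_mul_X_pow (m : ℕ → ℝ) (n : ℕ) (a : ℝ) :
    momentFunctional m (C a * X ^ n) = a * m n := by
  rw [C_mul_X_pow_eq_monomial, momentFunctional_monomial]

theorem momentFunctional_X_pow (m : ℕ → ℝ) (n : ℕ) : momentFunctional m (X ^ n) = m n := by
  simpa using momentFunctional_C_mul_X_pow m n 1

theorem momentFunctional_one (m : ℕ → ℝ) : momentFunctional m 1 = m 0 := by
  simpa using momentFunctional_X_pow m 0

/-- `momentConv m₁ m₂ t = ∑_{i + j = t - 1} m₁ i * m₂ j`; note the index shift, and that it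
vanishes at `t = 0`. -/
noncomputable def momentConv (m₁ m₂ : ℕ → ℝ) (t : ℕ) : ℝ :=
  ∑ i ∈ Finset.range t, m₁ i * m₂ (t - 1 - i)

theorem momentConv_zero (m₁ m₂ : ℕ → ℝ) : momentConv m₁ m₂ 0 = 0 := by
  simp [momentConv]

theorem momentConv_one (m₁ m₂ : ℕ → ℝ) : momentConv m₁ m₂ 1 = m₁ 0 * m₂ 0 := by
  simp [momentConv]

theorem momentFunctional_Lop_X_pow (m₁ m₂ : ℕ → ℝ) (n : ℕ) :
    momentFunctional m₂ (Lop m₁ (X ^ n)) = momentConv m₁ m₂ n := by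
  rw [Lop_X_pow, map_sum, momentConv, ← Finset.sum_range_reflect]
  refine Finset.sum_congr rfl fun k hk => ?_
  rw [momentFunctional_C_mul_X_pow, show n - 1 - (n - 1 - k) = k by
    have := Finset.mem_range.mp hk; omega]

noncomputable def secondOrderOp (m₁ m₂ : ℕ → ℝ) (A B : ℝ[X]) : ℝ[X] →ₗ[ℝ] ℝ[X] :=
  LinearMap.mulLeft ℝ A ∘ₗ Lop.toLinearMap m₂ ∘ₗ Lop.toLinearMap m₁
    + LinearMap.mulLeft ℝ B ∘ₗ Lop.toLinearMap m₁

section secondOrderOp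

variable (m₁ m₂ : ℕ → ℝ) (A B : ℝ[X])

theorem secondOrderOp_apply (f : ℝ[X]) :
    secondOrderOp m₁ m₂ A B f = A * Lop m₂ (Lop m₁ f) + B * Lop m₁ f := by
  simp [secondOrderOp, Lop.toLinearMap_apply]

theorem secondOrderOp_one : secondOrderOp m₁ m₂ A B 1 = 0 := by
  simp [secondOrderOp_apply, Lop_one, Lop_zero]

theorem secondOrderOp_C_mul (r : ℝ) (f : ℝ[X]) :
    secondOrderOp m₁ m₂ A B (C r * f) = C r * secondOrderOp m₁ m₂ A B f := by
  simpa only [smul_eq_C_mul] using map_smul (secondOrderOp m₁ m₂ A B) r f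

theorem secondOrderOp_C (r : ℝ) : secondOrderOp m₁ m₂ A B (C r) = 0 := by
  simpa [secondOrderOp_one] using secondOrderOp_C_mul m₁ m₂ A B r 1

theorem secondOrderOp_X_mul (f : ℝ[X]) :
    secondOrderOp m₁ m₂ A B (X * f) = X * secondOrderOp m₁ m₂ A B f
      + C (momentFunctional m₂ (Lop m₁ f)) * A + C (momentFunctional m₁ f) * B := by
  simp only [secondOrderOp_apply, Lop_X_mul, Lop_add, Lop_C]
  ring

theorem secondOrderOp_X : secondOrderOp m₁ m₂ A B X = C (m₁ 0) * B := by
  simpa [secondOrderOp_one, Lop_one, Lop_zero, momentFunctional_one] using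
    secondOrderOp_X_mul m₁ m₂ A B 1

end secondOrderOp

section eigen

variable {m₁ m₂ : ℕ → ℝ} {a b c d e : ℝ}

local notation "Q" => secondOrderOp m₁ m₂ (C a + C b * X + C c * X ^ 2) (C d + C e * X)
local notation "T" => momentConv m₁ m₂

theorem secondOrderOp_X_pow (h₁ : m₁ 0 = 1) (h₂ : m₂ 0 = 1)
    (hrec : ∀ n, 1 ≤ n → a * T (n - 1) + b * T n + c * T (n + 1) + d * m₁ (n - 1) + e * m₁ n = 0)
    {n : ℕ} (hn : 1 ≤ n) :
    Q (X ^ n) = C (c + e) * X ^ n - C (c * T n) * X + C (a * T (n - 1) + d * m₁ (n - 1)) := by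
  induction n, hn using Nat.le_induction with
  | base =>
    rw [pow_one, secondOrderOp_X, h₁, momentConv_one, momentConv_zero, h₁, h₂]
    simp only [map_add, map_mul, map_one, map_zero]
    ring
  | succ n hn ih =>
    have hrec_n := congrArg C (hrec n hn)
    simp only [map_add, map_mul, map_zero] at hrec_n
    rw [pow_succ' X n, secondOrderOp_X_mul, ih, momentFunctional_Lop_X_pow,
      momentFunctional_X_pow, Nat.add_sub_cancel]
    simp only [map_add, map_mul]
    linear_combination X * hrec_n

theorem exists_eigenpoly_of_two_le (h₁ : m₁ 0 = 1) (h₂ : m₂ 0 = 1)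
    (hrec : ∀ n, 1 ≤ n → a * T (n - 1) + b * T n + c * T (n + 1) + d * m₁ (n - 1) + e * m₁ n = 0)
    (hce : c + e ≠ 0) {n : ℕ} (hn : 2 ≤ n) :
    ∃ P : ℝ[X], P.degree = n ∧ Q P = (c + e) • P := by
  -- since `Q X = (c + e) X - c X + d`, the coefficient `-T n` cancels the `-c T n X` of `Q (X ^ n)`
  set q := (a * T (n - 1) + d * m₁ (n - 1) - d * T n) / (c + e)
  refine ⟨X ^ n + (C (-T n) * X + C q), ?_, ?_⟩
  · rw [degree_add_eq_left_of_degree_lt, degree_X_pow]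
    exact degree_linear_le.trans_lt (by rw [degree_X_pow]; exact_mod_cast hn)
  · have hq : (c + e) * q = a * T (n - 1) + d * m₁ (n - 1) - d * T n := mul_div_cancel₀ _ hce
    rw [map_add, map_add, secondOrderOp_C_mul, secondOrderOp_C,
      secondOrderOp_X_pow h₁ h₂ hrec (by omega), secondOrderOp_X, h₁, smul_eq_C_mul]
    have hqC := congrArg C hq
    simp only [map_add, map_mul, map_sub, map_neg, map_one] at hqC ⊢
    linear_combination -hqC

theorem exists_eigenpoly_one (h₁ : m₁ 0 = 1) (hed : e ≠ 0 ∨ d = 0) :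
    ∃ P : ℝ[X], P.degree = 1 ∧ Q P = e • P := by
  have hd : e * (d / e) = d := by
    rcases hed with he | rfl
    · exact mul_div_cancel₀ d he
    · simp
  refine ⟨X + C (d / e), degree_X_add_C _, ?_⟩
  have hdC : C e * C (d / e) = C d := by rw [← C_mul, hd]
  rw [map_add, secondOrderOp_X, secondOrderOp_C, h₁, smul_eq_C_mul, map_one]
  linear_combination -hdC

end eigen

theorem stmt13_general (μ ν : Measure ℝ) [IsProbabilityMeasure μ] [IsProbabilityMeasure ν]
    (a b c d e : ℝ) (hce : c + e ≠ 0) (hed : e ≠ 0 ∨ d = 0)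
    (hrec : ∀ n : ℕ, 1 ≤ n →
      a * (∑ i ∈ Finset.range (n - 1), mom μ i * mom ν (n - 2 - i))
      + b * (∑ i ∈ Finset.range n, mom μ i * mom ν (n - 1 - i))
      + c * (∑ i ∈ Finset.range (n + 1), mom μ i * mom ν (n - i))
      + d * mom μ (n - 1) + e * mom μ n = 0) :
    ∃ (P : ℕ → Polynomial ℝ) (lam : ℕ → ℝ),
      (∀ n, (P n).degree = (n : WithBot ℕ)) ∧
      (∀ n, (C a + C b * X + C c * X ^ 2) * Lop (mom ν) (Lop (mom μ) (P n))
          + (C d + C e * X) * Lop (mom μ) (P n) = lam n • P n) ∧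
      lam 0 = 0 ∧ lam 1 = e ∧ ∀ n : ℕ, 2 ≤ n → lam n = c + e := by
  have hμ : mom μ 0 = 1 := by simp [mom]
  have hν : mom ν 0 = 1 := by simp [mom]
  have hrec' : ∀ n, 1 ≤ n → a * momentConv (mom μ) (mom ν) (n - 1)
      + b * momentConv (mom μ) (mom ν) n + c * momentConv (mom μ) (mom ν) (n + 1)
      + d * mom μ (n - 1) + e * mom μ n = 0 :=
    hrec -- definitionally, `n - 1 - 1 = n - 2` and `n + 1 - 1 = n`
  have hP : ∀ n : ℕ, ∃ P : ℝ[X], P.degree = n ∧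
      secondOrderOp (mom μ) (mom ν) (C a + C b * X + C c * X ^ 2) (C d + C e * X) P
        = (if n = 0 then 0 else if n = 1 then e else c + e) • P
    | 0 => ⟨1, degree_one, by simp [secondOrderOp_one]⟩
    | 1 => by simpa using exists_eigenpoly_one hμ hed
    | n + 2 => by simpa using exists_eigenpoly_of_two_le hμ hν hrec' hce (by omega : 2 ≤ n + 2)
  choose P hPdeg hPeig using hP
  refine ⟨P, _, hPdeg, fun n => (secondOrderOp_apply ..).symm.trans (hPeig n), rfl, rfl,
    fun n hn => ?_⟩
  simp [show n ≠ 0 by omega, show n ≠ 1 by omega]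

theorem stmt13 (μ ν : Measure ℝ) [IsProbabilityMeasure μ] [IsProbabilityMeasure ν]
    (hcsμ : CompactSupp μ) (hcsν : CompactSupp ν)
    (a b c d e : ℝ) (hce : c + e ≠ 0) (hed : e ≠ 0 ∨ d = 0)
    (hrec : ∀ n : ℕ, 1 ≤ n →
      a * (∑ i ∈ Finset.range (n - 1), mom μ i * mom ν (n - 2 - i))
      + b * (∑ i ∈ Finset.range n, mom μ i * mom ν (n - 1 - i))
      + c * (∑ i ∈ Finset.range (n + 1), mom μ i * mom ν (n - i))
      + d * mom μ (n - 1) + e * mom μ n = 0) :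
    ∃ (P : ℕ → Polynomial ℝ) (lam : ℕ → ℝ),
      (∀ n, (P n).degree = (n : WithBot ℕ)) ∧
      (∀ n, (C a + C b * X + C c * X ^ 2) * Lop (mom ν) (Lop (mom μ) (P n))
          + (C d + C e * X) * Lop (mom μ) (P n) = lam n • P n) ∧
      lam 0 = 0 ∧ lam 1 = e ∧ ∀ n : ℕ, 2 ≤ n → lam n = c + e :=
  stmt13_general μ ν a b c d e hce hed hrec
end
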